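/- arXiv:math/0702159 — 2 statements merged into one kernel-verified Lean document; each statement's English description precedes it below -/
import Mathlib

section
/- Let f : R → U be a homomorphism of commutative rings with R and U Noetherian, and let M be a representable U-module. Then M is also representable as an R-module (via restriction of scalars along f), and Att_R M = { f⁻¹(p) : p ∈ Att_U M }. -/
/- Common definitions: local cohomology modules, cohomological dimension, module dimension,
secondary representations and attached primes. -/

open CategoryTheory TensorProduct

/-- The `i`-th local cohomology module `H^i_a(M)`, as a type with its `R`-module structure. -/
noncomputable def TopLC (R : Type) [CommRing R] (a : Ideal R) (i : ℕ)
    (M : Type) [AddCommGroup M] [Module R M] : Type :=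
  ((localCohomology a i).obj (ModuleCat.of R M))

noncomputable instance (R : Type) [CommRing R] (a : Ideal R) (i : ℕ)
    (M : Type) [AddCommGroup M] [Module R M] : AddCommGroup (TopLC R a i M) :=
  inferInstanceAs (AddCommGroup ((localCohomology a i).obj (ModuleCat.of R M)))

noncomputable instance (R : Type) [CommRing R] (a : Ideal R) (i : ℕ)
    (M : Type) [AddCommGroup M] [Module R M] : Module R (TopLC R a i M) :=
  inferInstanceAs (Module R ((localCohomology a i).obj (ModuleCat.of R M)))

/-- The cohomological dimension `cd_R(a, M) = sup { i | H^i_a(M) ≠ 0 }`,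
with value `⊥` if all local cohomology modules vanish. -/
noncomputable def cohDim (R : Type) [CommRing R] (a : Ideal R)
    (M : Type) [AddCommGroup M] [Module R M] : WithBot ℕ∞ :=
  sSup {n : WithBot ℕ∞ | ∃ i : ℕ, n = (i : ℕ) ∧ Nontrivial (TopLC R a i M)}

/-- The (Krull) dimension of a module, i.e. the Krull dimension of its support. -/
noncomputable def moduleDim (R : Type) [CommRing R]
    (M : Type) [AddCommGroup M] [Module R M] : WithBot ℕ∞ :=
  Order.krullDim (Module.support R M)

/-- `Assh_R M`: the associated primes `p` of `M` with `dim R/p = dim M`. -/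
noncomputable def Assh (R : Type) [CommRing R]
    (M : Type) [AddCommGroup M] [Module R M] : Set (Ideal R) :=
  { p | p ∈ associatedPrimes R M ∧ ringKrullDim (R ⧸ p) = moduleDim R M }

/-- A submodule `S` is secondary if `S ≠ 0` and every `r : R` acts on `S` either
surjectively or nilpotently. -/
def IsSecondarySub (R : Type) [CommRing R] {M : Type} [AddCommGroup M] [Module R M]
    (S : Submodule R M) : Prop :=
  S ≠ ⊥ ∧ ∀ r : R, (∀ m ∈ S, ∃ s ∈ S, r • s = m) ∨ (∃ n : ℕ, ∀ m ∈ S, r ^ n • m = 0)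

/-- A module is representable if it is the (finite) sum of secondary submodules. -/
def IsRepresentable (R : Type) [CommRing R] (M : Type) [AddCommGroup M] [Module R M] : Prop :=
  ∃ (n : ℕ) (S : Fin n → Submodule R M), (∀ i, IsSecondarySub R (S i)) ∧ (⨆ i, S i) = ⊤

/-- A minimal secondary representation: secondary submodules summing to the whole module,
with pairwise distinct attached primes, none contained in the sum of the others. -/
def IsMinimalRep (R : Type) [CommRing R] {M : Type} [AddCommGroup M] [Module R M]
    {n : ℕ} (S : Fin n → Submodule R M) : Prop :=
  (∀ i, IsSecondarySub R (S i)) ∧ (⨆ i, S i) = ⊤ ∧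
    (Function.Injective fun i => (S i).annihilator.radical) ∧
    ∀ j, ¬ (S j ≤ ⨆ i ∈ ({j}ᶜ : Set (Fin n)), S i)

/-- The attached primes of a module: the radicals of the annihilators of the terms of a
minimal secondary representation. -/
def AttachedPrimes (R : Type) [CommRing R] (M : Type) [AddCommGroup M] [Module R M] :
    Set (Ideal R) :=
  { p | ∃ (n : ℕ) (S : Fin n → Submodule R M), IsMinimalRep R S ∧
      ∃ i, p = (S i).annihilator.radical }

/-- `stab b N = ⟨b⟩N = ⋂ₙ bⁿN`. -/
def stab {R M : Type} [CommRing R] [AddCommGroup M] [Module R M]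
    (b : Ideal R) (N : Submodule R M) : Submodule R M :=
  ⨅ n : ℕ, b ^ n • N


section Aux
variable {R M : Type} [CommRing R] [AddCommGroup M] [Module R M]

lemma mem_radAnn {S : Submodule R M} {r : R} :
    r ∈ S.annihilator.radical ↔ ∃ n : ℕ, ∀ m ∈ S, r ^ n • m = 0 := by
  rw [Ideal.mem_radical_iff]
  exact exists_congr fun n => Submodule.mem_annihilator

lemma surj_pow {S : Submodule R M} {r : R} (h : ∀ m ∈ S, ∃ s ∈ S, r • s = m) :
    ∀ (k : ℕ), ∀ m ∈ S, ∃ s ∈ S, r ^ k • s = m := by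
  intro k
  induction k with
  | zero => intro m hm; exact ⟨m, hm, by simp⟩
  | succ k ih =>
    intro m hm
    obtain ⟨s₁, hs₁, hrs₁⟩ := h m hm
    obtain ⟨s₂, hs₂, hrs₂⟩ := ih s₁ hs₁
    exact ⟨s₂, hs₂, by rw [pow_succ', mul_smul, hrs₂, hrs₁]⟩

lemma sec_surj {S : Submodule R M} (hS : IsSecondarySub R S) {r : R}
    (hr : r ∉ S.annihilator.radical) : ∀ m ∈ S, ∃ s ∈ S, r • s = m := by
  rcases hS.2 r with h | h
  · exact h
  · exact absurd (mem_radAnn.2 h) hr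

lemma annihilator_sup' (S T : Submodule R M) :
    (S ⊔ T).annihilator = S.annihilator ⊓ T.annihilator := by
  ext r
  simp only [Submodule.mem_inf, Submodule.mem_annihilator]
  constructor
  · exact fun h => ⟨fun m hm => h m (le_sup_left (a := S) hm),
      fun m hm => h m (le_sup_right (b := T) hm)⟩
  · rintro ⟨h1, h2⟩ m hm
    obtain ⟨y, hy, z, hz, rfl⟩ := Submodule.mem_sup.1 hm
    rw [smul_add, h1 y hy, h2 z hz, add_zero]

lemma sec_sup {S T : Submodule R M} (hS : IsSecondarySub R S) (hT : IsSecondarySub R T)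
    (h : S.annihilator.radical = T.annihilator.radical) :
    IsSecondarySub R (S ⊔ T) ∧ (S ⊔ T).annihilator.radical = S.annihilator.radical := by
  have hrad : (S ⊔ T).annihilator.radical = S.annihilator.radical := by
    rw [annihilator_sup', Ideal.radical_inf, ← h, inf_idem]
  refine ⟨⟨?_, ?_⟩, hrad⟩
  · intro hbot
    exact hS.1 (le_bot_iff.1 (hbot ▸ le_sup_left))
  · intro r
    by_cases hr : r ∈ S.annihilator.radical
    · right
      obtain ⟨n₁, h1⟩ := mem_radAnn.1 hr
      obtain ⟨n₂, h2⟩ := mem_radAnn.1 (h ▸ hr)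
      refine ⟨n₁ + n₂, fun m hm => ?_⟩
      obtain ⟨y, hy, z, hz, rfl⟩ := Submodule.mem_sup.1 hm
      have hy0 : r ^ (n₁ + n₂) • y = 0 := by rw [add_comm, pow_add, mul_smul, h1 y hy, smul_zero]
      have hz0 : r ^ (n₁ + n₂) • z = 0 := by rw [pow_add, mul_smul, h2 z hz, smul_zero]
      rw [smul_add, hy0, hz0, add_zero]
    · left
      intro m hm
      obtain ⟨y, hy, z, hz, rfl⟩ := Submodule.mem_sup.1 hm
      obtain ⟨s, hs, hrs⟩ := sec_surj hS hr y hy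
      obtain ⟨t, ht, hrt⟩ := sec_surj hT (h ▸ hr) z hz
      exact ⟨s + t, Submodule.mem_sup.2 ⟨s, hs, t, ht, rfl⟩, by rw [smul_add, hrs, hrt]⟩

/-- `M/N` is a secondary quotient. -/
def SecQuot (N : Submodule R M) : Prop :=
  N ≠ ⊤ ∧ ∀ r : R, (∀ m : M, ∃ s : M, r • s - m ∈ N) ∨ ∃ n : ℕ, ∀ m : M, r ^ n • m ∈ N

/-- radical of the annihilator of `M/N`. -/
def qRad (N : Submodule R M) : Ideal R := (N.colon ⊤).radical

lemma mem_qRad {N : Submodule R M} {r : R} :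
    r ∈ qRad N ↔ ∃ n : ℕ, ∀ m : M, r ^ n • m ∈ N := by
  rw [qRad, Ideal.mem_radical_iff]
  refine exists_congr fun n => ?_
  rw [Submodule.mem_colon]
  exact ⟨fun h m => h m trivial, fun h m _ => h m⟩

lemma qsurj_pow {N : Submodule R M} {r : R} (h : ∀ m : M, ∃ s : M, r • s - m ∈ N) :
    ∀ (k : ℕ), ∀ m : M, ∃ s : M, r ^ k • s - m ∈ N := by
  intro k
  induction k with
  | zero => intro m; exact ⟨m, by simp⟩
  | succ k ih =>
    intro m
    obtain ⟨s₁, hs₁⟩ := h m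
    obtain ⟨s₂, hs₂⟩ := ih s₁
    refine ⟨s₂, ?_⟩
    have key : r ^ (k + 1) • s₂ - m = r • (r ^ k • s₂ - s₁) + (r • s₁ - m) := by
      rw [pow_succ', mul_smul, smul_sub]; abel
    rw [key]
    exact N.add_mem (N.smul_mem r hs₂) hs₁

lemma qRad_prime {N : Submodule R M} (h : SecQuot N) : (qRad N).IsPrime := by
  constructor
  · rw [Ideal.ne_top_iff_one]
    intro h1
    obtain ⟨n, hn⟩ := mem_qRad.1 h1
    exact h.1 (Submodule.eq_top_iff'.2 fun m => by simpa using hn m)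
  · intro x y hxy
    by_cases hx : x ∈ qRad N
    · exact Or.inl hx
    · right
      have hsurj : ∀ m : M, ∃ s : M, x • s - m ∈ N := by
        rcases h.2 x with h' | h'
        · exact h'
        · exact absurd (mem_qRad.2 h') hx
      obtain ⟨k, hk⟩ := mem_qRad.1 hxy
      refine mem_qRad.2 ⟨k, fun m => ?_⟩
      obtain ⟨s, hs⟩ := qsurj_pow hsurj k m
      have h1 : y ^ k • (m - x ^ k • s) ∈ N := N.smul_mem _ (by rw [← neg_sub]; exact N.neg_mem hs)
      have key : y ^ k • m = y ^ k • (m - x ^ k • s) + (x * y) ^ k • s := by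
        rw [smul_sub, mul_pow, mul_comm (x ^ k) (y ^ k), mul_smul]; abel
      rw [key]
      exact N.add_mem h1 (hk s)

end Aux

section Core
variable {R M : Type} [CommRing R] [AddCommGroup M] [Module R M]

lemma exists_sum {n : ℕ} {S : Fin n → Submodule R M} {m : M} (h : m ∈ ⨆ i, S i) :
    ∃ c : Fin n → M, (∀ i, c i ∈ S i) ∧ ∑ i, c i = m := by
  obtain ⟨f, hf, hsum⟩ := (Submodule.mem_iSup_iff_exists_finsupp S m).1 h
  refine ⟨f, hf, ?_⟩
  rwa [Finsupp.sum_fintype _ _ (fun _ => rfl)] at hsum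

lemma att_subset_char {n : ℕ} {S : Fin n → Submodule R M} (hS : IsMinimalRep R S) (i : Fin n) :
    ∃ N : Submodule R M, SecQuot N ∧ qRad N = (S i).annihilator.radical := by
  set N := ⨆ j ∈ ({i}ᶜ : Set (Fin n)), S j with hNdef
  have hle : ∀ j, j ≠ i → S j ≤ N := fun j hj =>
    le_biSup S (show j ∈ ({i}ᶜ : Set (Fin n)) by simp [hj])
  have hnle : ¬ S i ≤ N := hS.2.2.2 i
  have hNtop : N ≠ ⊤ := fun h => hnle (h ▸ le_top)
  have hnil : ∀ r ∈ (S i).annihilator.radical, ∃ k : ℕ, ∀ m : M, r ^ k • m ∈ N := by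
    intro r hr
    obtain ⟨k, hk⟩ := mem_radAnn.1 hr
    refine ⟨k, fun m => ?_⟩
    obtain ⟨c, hc, rfl⟩ := exists_sum (show m ∈ ⨆ i, S i by rw [hS.2.1]; trivial)
    rw [Finset.smul_sum]
    refine Submodule.sum_mem _ fun j _ => ?_
    by_cases hj : j = i
    · subst hj; rw [hk _ (hc j)]; exact N.zero_mem
    · exact hle j hj (Submodule.smul_mem _ _ (hc j))
  have hq : SecQuot N := by
    refine ⟨hNtop, fun r => ?_⟩
    by_cases hr : r ∈ (S i).annihilator.radical
    · exact Or.inr (hnil r hr)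
    · left
      intro m
      obtain ⟨c, hc, rfl⟩ := exists_sum (show m ∈ ⨆ i, S i by rw [hS.2.1]; trivial)
      obtain ⟨s, hs, hrs⟩ := sec_surj (hS.1 i) hr (c i) (hc i)
      refine ⟨s, ?_⟩
      have key : r • s - ∑ j, c j = - ∑ j ∈ Finset.univ.erase i, c j := by
        rw [hrs, ← Finset.add_sum_erase _ _ (Finset.mem_univ i)]; abel
      rw [key]
      exact N.neg_mem (Submodule.sum_mem _ fun j hj => hle j (Finset.ne_of_mem_erase hj) (hc j))
  refine ⟨N, hq, le_antisymm ?_ ?_⟩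
  · intro r hr
    obtain ⟨k, hk⟩ := mem_qRad.1 hr
    by_contra hri
    have hsurj := surj_pow (sec_surj (hS.1 i) hri) k
    refine hnle (fun m hm => ?_)
    obtain ⟨s, hs, hrs⟩ := hsurj m hm
    rw [← hrs]; exact hk s
  · intro r hr; exact mem_qRad.2 (hnil r hr)

lemma char_subset_att {n : ℕ} {S : Fin n → Submodule R M} (h1 : ∀ i, IsSecondarySub R (S i))
    (h2 : (⨆ i, S i) = ⊤) {N : Submodule R M} (hN : SecQuot N) :
    ∃ i, qRad N = (S i).annihilator.radical := by
  classical
  set I : Finset (Fin n) := Finset.univ.filter (fun i => ¬ S i ≤ N) with hI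
  have hIcompl : ∀ i, i ∉ I → S i ≤ N := by
    intro i hi
    by_contra hc
    exact hi (by simp [hI, hc])
  have hub : ∀ i ∈ I, qRad N ≤ (S i).annihilator.radical := by
    intro i hi r hr
    obtain ⟨k, hk⟩ := mem_qRad.1 hr
    by_contra hri
    have hsurj := surj_pow (sec_surj (h1 i) hri) k
    have hSiN : S i ≤ N := by
      intro m hm
      obtain ⟨s, hs, hrs⟩ := hsurj m hm
      rw [← hrs]; exact hk s
    simp only [hI, Finset.mem_filter] at hi
    exact hi.2 hSiN
  have hlb : I.inf (fun i => (S i).annihilator.radical) ≤ qRad N := by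
    intro r hr
    have hrI : ∀ i ∈ I, r ∈ (S i).annihilator.radical := fun i hi =>
      Finset.inf_le (f := fun i => (S i).annihilator.radical) hi hr
    have hexk : ∀ i ∈ I, ∃ k, r ^ k ∈ (S i).annihilator := fun i hi =>
      Ideal.mem_radical_iff.1 (hrI i hi)
    choose k hk using hexk
    have hex : ∃ K : ℕ, ∀ i (hi : i ∈ I), r ^ K ∈ (S i).annihilator := by
      refine ⟨∑ j ∈ I.attach, k j j.2, fun i hi => ?_⟩
      have hle : k i hi ≤ ∑ j ∈ I.attach, k j j.2 :=
        Finset.single_le_sum (f := fun (j : {x // x ∈ I}) => k j j.2)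
          (fun _ _ => Nat.zero_le _) (Finset.mem_attach _ ⟨i, hi⟩)
      rw [← Nat.sub_add_cancel hle, pow_add]
      exact Ideal.mul_mem_left _ _ (hk i hi)
    obtain ⟨K, hK⟩ := hex
    refine mem_qRad.2 ⟨K, fun m => ?_⟩
    obtain ⟨c, hc, rfl⟩ := exists_sum (show m ∈ ⨆ i, S i by rw [h2]; trivial)
    rw [Finset.smul_sum]
    refine Submodule.sum_mem _ fun j _ => ?_
    by_cases hj : j ∈ I
    · rw [Submodule.mem_annihilator.1 (hK j hj) _ (hc j)]; exact N.zero_mem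
    · exact hIcompl j hj (Submodule.smul_mem _ _ (hc j))
  have hne : I.Nonempty := by
    by_contra h
    have hall : ∀ i, S i ≤ N := fun i =>
      hIcompl i (by simp [Finset.not_nonempty_iff_eq_empty.1 h])
    exact hN.1 (top_le_iff.1 (h2 ▸ iSup_le hall))
  obtain ⟨i, hi, hle⟩ := (Ideal.IsPrime.inf_le' (qRad_prime hN)).1 hlb
  exact ⟨i, le_antisymm (hub i hi) hle⟩

lemma att_eq {n : ℕ} {S : Fin n → Submodule R M} (hS : IsMinimalRep R S) :
    AttachedPrimes R M = Set.range fun i => (S i).annihilator.radical := by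
  ext p
  constructor
  · rintro ⟨m, T, hT, j, rfl⟩
    obtain ⟨N, hN, hrad⟩ := att_subset_char hT j
    obtain ⟨i, hi⟩ := char_subset_att hS.1 hS.2.1 hN
    exact ⟨i, hi.symm.trans hrad⟩
  · rintro ⟨i, rfl⟩
    exact ⟨n, S, hS, i, rfl⟩

lemma biSup_compl_eq {n : ℕ} (S : Fin (n+1) → Submodule R M) (j : Fin (n+1)) :
    (⨆ k, S (j.succAbove k)) = ⨆ i ∈ ({j}ᶜ : Set (Fin (n+1))), S i := by
  have h := iSup_range (g := S) (f := j.succAbove)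
  rw [Fin.range_succAbove] at h
  exact h.symm

lemma sup_split {n : ℕ} (S : Fin (n+1) → Submodule R M) (j : Fin (n+1)) :
    S j ⊔ (⨆ i ∈ ({j}ᶜ : Set (Fin (n+1))), S i) = ⨆ i, S i := by
  apply le_antisymm
  · exact sup_le (le_iSup S j) (iSup₂_le fun i _ => le_iSup S i)
  · refine iSup_le fun i => ?_
    by_cases hij : i = j
    · subst hij; exact le_sup_left
    · exact le_trans (le_biSup S (show i ∈ ({j}ᶜ : Set (Fin (n+1))) by simp [hij])) le_sup_right

lemma exists_minimal : ∀ (n : ℕ) (S : Fin n → Submodule R M),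
    (∀ i, IsSecondarySub R (S i)) → (⨆ i, S i) = ⊤ →
    ∃ (m : ℕ) (T : Fin m → Submodule R M), IsMinimalRep R T ∧
      ∀ j, ∃ i, (T j).annihilator.radical = (S i).annihilator.radical := by
  intro n
  induction n with
  | zero =>
    intro S h1 h2
    exact ⟨0, S, ⟨h1, h2, fun a => a.elim0, fun j => j.elim0⟩, fun j => j.elim0⟩
  | succ n ih =>
    intro S h1 h2
    by_cases hred : ∃ j, S j ≤ ⨆ i ∈ ({j}ᶜ : Set (Fin (n+1))), S i
    · obtain ⟨j, hj⟩ := hred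
      have h1' : ∀ k, IsSecondarySub R (S (j.succAbove k)) := fun k => h1 _
      have h2' : (⨆ k, S (j.succAbove k)) = ⊤ := by
        rw [biSup_compl_eq S j]
        rw [← sup_split S j, sup_eq_right.2 hj] at h2
        exact h2
      obtain ⟨m, T, hT, hcorr⟩ := ih (fun k => S (j.succAbove k)) h1' h2'
      refine ⟨m, T, hT, fun k => ?_⟩
      obtain ⟨i, hi⟩ := hcorr k
      exact ⟨j.succAbove i, hi⟩
    · by_cases hinj : Function.Injective fun i => (S i).annihilator.radical
      · exact ⟨n+1, S, ⟨h1, h2, hinj, fun j hj => hred ⟨j, hj⟩⟩, fun j => ⟨j, rfl⟩⟩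
      · rw [Function.not_injective_iff] at hinj
        obtain ⟨a, b, hab, hne⟩ := hinj
        have hmerge := sec_sup (h1 a) (h1 b) hab
        set S' : Fin n → Submodule R M :=
          fun k => Function.update S a (S a ⊔ S b) (b.succAbove k) with hS'
        obtain ⟨ka, hka⟩ : ∃ k, b.succAbove k = a := by
          have : a ∈ Set.range b.succAbove := by
            rw [Fin.range_succAbove]; simpa using hne
          exact this
        have hval : ∀ k, S' k = if b.succAbove k = a then S a ⊔ S b else S (b.succAbove k) :=
          fun k => Function.update_apply S a (S a ⊔ S b) (b.succAbove k)
        have h1' : ∀ k, IsSecondarySub R (S' k) := by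
          intro k
          rw [hval k]
          split_ifs with h
          · exact hmerge.1
          · exact h1 _
        have hsub : ∀ k, ∃ i, (S' k).annihilator.radical = (S i).annihilator.radical := by
          intro k
          rw [hval k]
          split_ifs with h
          · exact ⟨a, hmerge.2⟩
          · exact ⟨_, rfl⟩
        have h2' : (⨆ k, S' k) = ⊤ := by
          rw [eq_top_iff, ← h2]
          refine iSup_le fun l => ?_
          by_cases hlb : l = b
          · have hstep : S l ≤ S' ka := by
              rw [hval ka, if_pos hka, hlb]; exact le_sup_right
            exact le_trans hstep (le_iSup S' ka)
          · obtain ⟨k, hk⟩ : ∃ k, b.succAbove k = l := by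
              have : l ∈ Set.range b.succAbove := by
                rw [Fin.range_succAbove]; simpa using hlb
              exact this
            refine le_trans ?_ (le_iSup S' k)
            rw [hval k]
            split_ifs with h
            · rw [← hk, h]; exact le_sup_left
            · rw [hk]
        obtain ⟨m, T, hT, hcorr⟩ := ih S' h1' h2'
        refine ⟨m, T, hT, fun k => ?_⟩
        obtain ⟨i, hi⟩ := hcorr k
        obtain ⟨i', hi'⟩ := hsub i
        exact ⟨i', hi.trans hi'⟩

end Core

section Transfer
variable {R U M : Type} [CommRing R] [CommRing U] [AddCommGroup M] [Module U M] [Module R M]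
variable (f : R →+* U) (hsmul : ∀ (r : R) (m : M), r • m = f r • m)

/-- Restriction of scalars of a submodule along `f`. -/
def toRes (S : Submodule U M) : Submodule R M where
  carrier := S
  add_mem' := fun h h' => S.add_mem h h'
  zero_mem' := S.zero_mem
  smul_mem' := fun r m hm => by rw [hsmul]; exact S.smul_mem (f r) hm

lemma mem_toRes {S : Submodule U M} {m : M} : m ∈ toRes f hsmul S ↔ m ∈ S := Iff.rfl

lemma toRes_sec {S : Submodule U M} (hS : IsSecondarySub U S) :
    IsSecondarySub R (toRes f hsmul S) := by
  constructor
  · intro hbot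
    apply hS.1
    rw [Submodule.eq_bot_iff] at hbot ⊢
    exact fun m hm => hbot m hm
  · intro r
    rcases hS.2 (f r) with h | h
    · left
      intro m hm
      obtain ⟨s, hs, hfs⟩ := h m hm
      exact ⟨s, hs, by rw [hsmul]; exact hfs⟩
    · right
      obtain ⟨k, hk⟩ := h
      refine ⟨k, fun m hm => ?_⟩
      rw [hsmul, map_pow]
      exact hk m hm

lemma toRes_iSup_top {n : ℕ} {S : Fin n → Submodule U M} (h : (⨆ i, S i) = ⊤) :
    (⨆ i, toRes f hsmul (S i)) = ⊤ := by
  rw [eq_top_iff]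
  intro m _
  have hm : m ∈ ⨆ i, S i := by rw [h]; trivial
  exact Submodule.iSup_induction S (motive := fun m => m ∈ ⨆ i, toRes f hsmul (S i)) hm
    (fun i x hx => Submodule.mem_iSup_of_mem i hx) (Submodule.zero_mem _)
    (fun x y hx hy => Submodule.add_mem _ hx hy)

lemma toRes_radAnn (S : Submodule U M) :
    (toRes f hsmul S).annihilator.radical = Ideal.comap f S.annihilator.radical := by
  rw [Ideal.comap_radical]
  congr 1
  ext r
  rw [Submodule.mem_annihilator, Ideal.mem_comap, Submodule.mem_annihilator]
  exact forall₂_congr fun m hm => by rw [hsmul]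

lemma toRes_secQuot {N : Submodule U M} (hN : SecQuot N) : SecQuot (toRes f hsmul N) := by
  constructor
  · intro htop
    apply hN.1
    rw [Submodule.eq_top_iff'] at htop ⊢
    exact htop
  · intro r
    rcases hN.2 (f r) with h | h
    · left
      intro m
      obtain ⟨s, hs⟩ := h m
      refine ⟨s, ?_⟩
      show r • s - m ∈ N
      rw [hsmul]
      exact hs
    · right
      obtain ⟨k, hk⟩ := h
      refine ⟨k, fun m => ?_⟩
      show r ^ k • m ∈ N
      rw [hsmul, map_pow]
      exact hk m

lemma toRes_qRad (N : Submodule U M) :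
    qRad (toRes f hsmul N) = Ideal.comap f (qRad N) := by
  rw [qRad, qRad, Ideal.comap_radical]
  congr 1
  ext r
  rw [Submodule.mem_colon, Ideal.mem_comap, Submodule.mem_colon]
  refine ⟨fun h m hm => ?_, fun h m hm => ?_⟩
  · have := h m trivial
    rwa [hsmul] at this
  · have := h m trivial
    show r • m ∈ N
    rw [hsmul]
    exact this

end Transfer


/-- If `f : R → U` is a homomorphism of Noetherian commutative rings and `M` is a
representable `U`-module, then `M` is representable as an `R`-module via restriction of
scalars along `f`, and `Att_R M = { f⁻¹(p) : p ∈ Att_U M }`. -/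
theorem stmt_0 (R U : Type) [CommRing R] [CommRing U]
    [IsNoetherianRing R] [IsNoetherianRing U]
    (f : R →+* U) (M : Type) [AddCommGroup M] [Module U M]
    (hM : IsRepresentable U M) :
    letI : Module R M := Module.compHom M f
    IsRepresentable R M ∧
      AttachedPrimes R M = (fun p : Ideal U => Ideal.comap f p) '' AttachedPrimes U M := by
  letI : Module R M := Module.compHom M f
  have hsmul : ∀ (r : R) (m : M), r • m = f r • m := fun _ _ => rfl
  obtain ⟨n0, S0, hS1, hS2⟩ := hM
  obtain ⟨mU, T, hT, -⟩ := exists_minimal n0 S0 hS1 hS2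
  obtain ⟨mR, W, hW, hWc⟩ := exists_minimal mU (fun j => toRes f hsmul (T j))
    (fun j => toRes_sec f hsmul (hT.1 j)) (toRes_iSup_top f hsmul hT.2.1)
  constructor
  · exact ⟨mU, fun j => toRes f hsmul (T j), fun j => toRes_sec f hsmul (hT.1 j),
      toRes_iSup_top f hsmul hT.2.1⟩
  · rw [att_eq hW, att_eq hT]
    ext p
    constructor
    · rintro ⟨k, rfl⟩
      obtain ⟨j, hj⟩ := hWc k
      exact ⟨(T j).annihilator.radical, ⟨j, rfl⟩,
        (toRes_radAnn f hsmul (T j)).symm.trans hj.symm⟩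
    · rintro ⟨q, ⟨j, rfl⟩, rfl⟩
      obtain ⟨N, hN, hrad⟩ := att_subset_char hT j
      obtain ⟨k, hk⟩ := char_subset_att hW.1 hW.2.1 (toRes_secQuot f hsmul hN)
      refine ⟨k, ?_⟩
      show (W k).annihilator.radical = Ideal.comap f (T j).annihilator.radical
      rw [← hk, toRes_qRad f hsmul, hrad]
end

section
/- Let R be a commutative Noetherian ring, m_1, …, m_t distinct maximal ideals of R, and A_1, …, A_t Artinian R-modules with Supp_R A_i = {m_i} for each i. Set A = ⊕_{i=1}^t A_i and 𝔐 = ∩_{i=1}^t m_i. Then for any ideal a of R with a ⊆ 𝔐 there is a natural isomorphism A / (Σ_{n∈ℕ} ⟨𝔐⟩(0 :_A aⁿ)) ≅ ⊕_{i=1}^t A_i / (Σ_{n∈ℕ} ⟨m_i⟩(0 :_{A_i} aⁿ)). -/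
/- Common definitions: local cohomology modules, cohomological dimension, module dimension,
secondary representations and attached primes. -/

open CategoryTheory TensorProduct

set_option linter.unusedSectionVars false

section Aux
variable {R : Type} [CommRing R]

lemma aux_ann_le {B : Type} [AddCommGroup B] [Module R B] {m : Ideal R} (hm : m.IsMaximal)
    (hsupp : Module.support R B = {⟨m, hm.isPrime⟩}) {x : B} (hx : x ≠ 0) :
    (Submodule.span R {x}).annihilator ≤ m := by
  have hne : (Submodule.span R {x}).annihilator ≠ ⊤ := by
    intro h
    rw [Submodule.annihilator_eq_top_iff, Submodule.span_singleton_eq_bot] at h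
    exact hx h
  obtain ⟨m', hm', hle⟩ := Ideal.exists_le_maximal _ hne
  have hmem : (⟨m', hm'.isPrime⟩ : PrimeSpectrum R) ∈ Module.support R B :=
    Module.mem_support_iff_exists_annihilator.mpr ⟨x, hle⟩
  rw [hsupp, Set.mem_singleton_iff] at hmem
  have : m' = m := congrArg PrimeSpectrum.asIdeal hmem
  exact this ▸ hle

lemma aux_bij {B : Type} [AddCommGroup B] [Module R B] {m : Ideal R} (hm : m.IsMaximal)
    (hsupp : Module.support R B = {⟨m, hm.isPrime⟩}) {c : R} (hc : c ∉ m) :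
    Function.Bijective (fun x : B => c • x) := by
  constructor
  · intro x y hxy
    by_contra hne
    have hz : c • (x - y) = 0 := by
      simp only at hxy
      rw [smul_sub, hxy, sub_self]
    have hcm : c ∈ (Submodule.span R {x - y}).annihilator :=
      (Submodule.mem_annihilator_span_singleton _ _).mpr hz
    exact hc (aux_ann_le hm hsupp (sub_ne_zero.mpr hne) hcm)
  · by_contra hsur
    set f := LinearMap.lsmul R B c with hf
    have hlt : LinearMap.range f < ⊤ := lt_top_iff_ne_top.mpr (by
      intro h
      exact hsur (LinearMap.range_eq_top.mp h))
    have : Nontrivial (B ⧸ LinearMap.range f) :=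
      Submodule.Quotient.nontrivial_iff.mpr hlt.ne
    obtain ⟨q, hq⟩ := exists_ne (0 : B ⧸ LinearMap.range f)
    have hsub : Module.support R (B ⧸ LinearMap.range f) ⊆ {⟨m, hm.isPrime⟩} := by
      rw [← hsupp]
      exact Module.support_subset_of_surjective _ (Submodule.mkQ_surjective _)
    have hnonempty : (Module.support R (B ⧸ LinearMap.range f)).Nonempty := by
      rw [Set.nonempty_iff_ne_empty]
      intro h
      rw [Module.support_eq_empty_iff] at h
      exact hq (Subsingleton.elim _ _)
    have heq : Module.support R (B ⧸ LinearMap.range f) = {⟨m, hm.isPrime⟩} :=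
      (Set.Nonempty.subset_singleton_iff hnonempty).mp hsub
    obtain ⟨x, rfl⟩ := Submodule.mkQ_surjective _ q
    have hcq : c • (LinearMap.range f).mkQ x = 0 := by
      rw [← map_smul]
      exact (Submodule.Quotient.mk_eq_zero _).mpr ⟨x, rfl⟩
    exact hc (aux_ann_le hm heq hq ((Submodule.mem_annihilator_span_singleton _ _).mpr hcq))

lemma aux_smul_surj {B : Type} [AddCommGroup B] [Module R B] [IsArtinian R B]
    {c : R} (hc : Function.Injective (fun x : B => c • x)) (S : Submodule R B)
    {x : B} (hx : x ∈ S) : ∃ t ∈ S, c • t = x := by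
  let f : S →ₗ[R] S := (LinearMap.lsmul R B c).restrict (fun y hy => S.smul_mem c hy)
  have hfinj : Function.Injective f := by
    intro y z h
    have : c • (y : B) = c • (z : B) := congrArg Subtype.val h
    exact Subtype.ext (hc this)
  obtain ⟨⟨t, ht⟩, h⟩ := IsArtinian.surjective_of_injective_endomorphism f hfinj ⟨x, hx⟩
  exact ⟨t, ht, congrArg Subtype.val h⟩

lemma aux_smul_eq {t : ℕ} (m : Fin t → Ideal R) (hinj : Function.Injective m)
    (hmax : ∀ i, (m i).IsMaximal) (i : Fin t)
    {B : Type} [AddCommGroup B] [Module R B] [IsArtinian R B]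
    (hsupp : Module.support R B = {⟨m i, (hmax i).isPrime⟩})
    (S : Submodule R B) : (⨅ j, m j) • S = m i • S := by
  classical
  refine le_antisymm (Submodule.smul_mono_left (iInf_le _ i)) ?_
  obtain ⟨c, hcJ, hci⟩ : ∃ c, c ∈ (Finset.univ.erase i).inf m ∧ c ∉ m i := by
    by_contra h
    push_neg at h
    have hle : (Finset.univ.erase i).inf m ≤ m i := fun x hx => h x hx
    obtain ⟨j, hj, hji⟩ := (Ideal.IsPrime.inf_le' (hmax i).isPrime).mp hle
    have : m j = m i := (hmax j).eq_of_le (hmax i).ne_top hji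
    exact (Finset.mem_erase.mp hj).1 (hinj this)
  have hbij := aux_bij (hmax i) hsupp hci
  intro x hx
  obtain ⟨y, hy, rfl⟩ := aux_smul_surj hbij.injective (m i • S) hx
  show c • y ∈ (⨅ j, m j) • S
  refine Submodule.smul_induction_on hy ?_ ?_
  · intro r hr s hs
    rw [smul_smul]
    refine Submodule.smul_mem_smul ?_ hs
    rw [Ideal.mem_iInf]
    intro j
    by_cases hji : j = i
    · subst hji; exact Ideal.mul_mem_left _ c hr
    · have hle : (Finset.univ.erase i).inf m ≤ m j :=
        Finset.inf_le (Finset.mem_erase.mpr ⟨hji, Finset.mem_univ j⟩)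
      exact Ideal.mul_mem_right _ _ (hle hcJ)
  · intro u v hu hv
    rw [smul_add]
    exact Submodule.add_mem _ hu hv

lemma aux_pow_smul_eq {t : ℕ} (m : Fin t → Ideal R) (hinj : Function.Injective m)
    (hmax : ∀ i, (m i).IsMaximal) (i : Fin t)
    {B : Type} [AddCommGroup B] [Module R B] [IsArtinian R B]
    (hsupp : Module.support R B = {⟨m i, (hmax i).isPrime⟩})
    (S : Submodule R B) (n : ℕ) : (⨅ j, m j) ^ n • S = m i ^ n • S := by
  induction n with
  | zero => simp
  | succ n ih =>
    rw [pow_succ', pow_succ', ← smul_eq_mul, ← smul_eq_mul,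
      Submodule.smul_assoc, Submodule.smul_assoc, ih,
      aux_smul_eq m hinj hmax i hsupp]

end Aux

section PiAux
variable {R : Type} [CommRing R] {ι : Type} [Fintype ι] [DecidableEq ι]
  {M : ι → Type} [∀ i, AddCommGroup (M i)] [∀ i, Module R (M i)]

lemma pi_torsionBySet (s : Set R) :
    Submodule.torsionBySet R (∀ i, M i) s =
      Submodule.pi Set.univ (fun i => Submodule.torsionBySet R (M i) s) := by
  ext x
  simp only [Submodule.mem_torsionBySet_iff, Submodule.mem_pi, Set.mem_univ, forall_true_left]
  constructor
  · intro h i a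
    simpa using congrFun (h a) i
  · intro h a
    funext i
    simpa using h i a

lemma single_mem_pi {N : ∀ i, Submodule R (M i)} {i : ι} {n : M i} (hn : n ∈ N i) :
    Pi.single i n ∈ Submodule.pi Set.univ N := by
  rw [Submodule.mem_pi]
  intro j _
  by_cases hji : j = i
  · subst hji; rw [Pi.single_eq_same]; exact hn
  · rw [Pi.single_eq_of_ne hji]; exact (N j).zero_mem

lemma pi_smul (I : Ideal R) (N : ∀ i, Submodule R (M i)) :
    I • Submodule.pi Set.univ N = Submodule.pi Set.univ (fun i => I • N i) := by
  refine le_antisymm (Submodule.smul_le.mpr ?_) ?_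
  · intro r hr x hx
    rw [Submodule.mem_pi]
    intro i _
    exact Submodule.smul_mem_smul hr (Submodule.mem_pi.mp hx i (Set.mem_univ i))
  · intro x hx
    rw [Submodule.mem_pi] at hx
    have hx' : x = ∑ i, Pi.single i (x i) := (Finset.univ_sum_single x).symm
    rw [hx']
    refine Submodule.sum_mem _ fun i _ => ?_
    refine Submodule.smul_induction_on (hx i (Set.mem_univ i))
      (fun r hr n hn => ?_) (fun u v hu hv => ?_)
    · rw [Pi.single_smul]
      exact Submodule.smul_mem_smul hr (single_mem_pi hn)
    · rw [Pi.single_add]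
      exact add_mem hu hv

lemma pi_iInf' (S : (i : ι) → ℕ → Submodule R (M i)) :
    (⨅ n : ℕ, Submodule.pi Set.univ (fun i => S i n)) =
      Submodule.pi Set.univ (fun i => ⨅ n : ℕ, S i n) := by
  ext x
  simp only [Submodule.mem_iInf, Submodule.mem_pi, Set.mem_univ, forall_true_left]
  exact forall_comm

lemma pi_iSup_of_monotone (S : (i : ι) → ℕ → Submodule R (M i)) (hS : ∀ i, Monotone (S i)) :
    (⨆ n : ℕ, Submodule.pi Set.univ (fun i => S i n)) =
      Submodule.pi Set.univ (fun i => ⨆ n : ℕ, S i n) := by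
  classical
  refine le_antisymm (iSup_le fun n => Submodule.pi_mono fun i _ => le_iSup (S i) n) ?_
  intro x hx
  rw [Submodule.mem_pi] at hx
  have h : ∀ i, ∃ n, x i ∈ S i n := fun i =>
    (Submodule.mem_iSup_of_directed _ (hS i).directed_le).mp (hx i (Set.mem_univ i))
  choose n hn using h
  have hmem : x ∈ Submodule.pi Set.univ (fun i => S i (Finset.univ.sup n)) := by
    rw [Submodule.mem_pi]
    intro i _
    exact hS i (Finset.le_sup (Finset.mem_univ i)) (hn i)
  exact le_iSup (fun k => Submodule.pi Set.univ fun i => S i k) _ hmem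

end PiAux

/-- If `m_1, …, m_t` are distinct maximal ideals, `A_i` Artinian modules with
`Supp_R A_i = {m_i}`, `A = ⊕ᵢ A_i` and `𝔐 = ∩ᵢ m_i`, then for any ideal `a ⊆ 𝔐` we have
`A / (Σₙ ⟨𝔐⟩(0 :_A aⁿ)) ≅ ⊕ᵢ A_i / (Σₙ ⟨m_i⟩(0 :_{A_i} aⁿ))`. -/
theorem stmt_2 (R : Type) [CommRing R] [IsNoetherianRing R] (t : ℕ)
    (m : Fin t → Ideal R) (hinj : Function.Injective m) (hmax : ∀ i, (m i).IsMaximal)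
    (A : Fin t → Type) [∀ i, AddCommGroup (A i)] [∀ i, Module R (A i)]
    [∀ i, IsArtinian R (A i)]
    (hsupp : ∀ i, Module.support R (A i) = {⟨m i, (hmax i).isPrime⟩})
    (a : Ideal R) (ha : a ≤ ⨅ i, m i) :
    Nonempty
      (((∀ i, A i) ⧸ (⨆ n : ℕ, stab (⨅ i, m i)
          (Submodule.torsionBySet R (∀ i, A i) ((a ^ n : Ideal R) : Set R)))) ≃ₗ[R]
        ∀ i, (A i ⧸ (⨆ n : ℕ, stab (m i)
          (Submodule.torsionBySet R (A i) ((a ^ n : Ideal R) : Set R))))) := by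
  classical
  have hstab : ∀ n : ℕ,
      stab (⨅ i, m i) (Submodule.torsionBySet R (∀ i, A i) ((a ^ n : Ideal R) : Set R)) =
        Submodule.pi Set.univ
          (fun i => stab (m i) (Submodule.torsionBySet R (A i) ((a ^ n : Ideal R) : Set R))) := by
    intro n
    unfold stab
    rw [← pi_iInf']
    refine iInf_congr fun k => ?_
    rw [pi_torsionBySet, pi_smul]
    exact congrArg _ (funext fun i => aux_pow_smul_eq m hinj hmax i (hsupp i) _ k)
  have hmono : ∀ i, Monotone (fun n : ℕ =>
      stab (m i) (Submodule.torsionBySet R (A i) ((a ^ n : Ideal R) : Set R))) := by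
    intro i n k hnk
    unfold stab
    refine iInf_mono fun j => smul_mono_right _ ?_
    exact Submodule.torsionBySet_le_torsionBySet_of_subset
      (fun x hx => Ideal.pow_le_pow_right hnk hx)
  have key : (⨆ n : ℕ, stab (⨅ i, m i)
        (Submodule.torsionBySet R (∀ i, A i) ((a ^ n : Ideal R) : Set R)))
      = Submodule.pi Set.univ (fun i => ⨆ n : ℕ, stab (m i)
        (Submodule.torsionBySet R (A i) ((a ^ n : Ideal R) : Set R))) := by
    rw [← pi_iSup_of_monotone _ hmono]
    exact iSup_congr hstab
  exact ⟨(Submodule.quotEquivOfEq _ _ key).trans (Submodule.quotientPi _)⟩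
end
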